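/- arXiv:2510.21051 — 2 statements merged into one kernel-verified Lean document; each statement's English description precedes it below -/
import Mathlib

section
/- Let n ∈ ℕ, and for i ∈ {M, C, G, F} let κ_i ∈ ℕ, θ̃_i ∈ ℝ^{κ_i}, and let Γ_i ∈ ℝ^{κ_i×κ_i} be invertible. Let r, a, b, ξ ∈ ℝⁿ and Ẽ ∈ ℝ, and define Q_M := aᵀ ⊗ Iₙ ∈ ℝ^{n×n²} and Q_C := bᵀ ⊗ Iₙ ∈ ℝ^{n×n²}. Let Φ′_M, Φ̇′_M, Φ′_C ∈ ℝ^{n²×κ_M or n²×κ_C} and Φ′_F, Φ′_G ∈ ℝ^{n×κ_F or n×κ_G} be matrices of compatible sizes. Define the (unprojected) weight update laws θ̂̇_M := Γ_M((Φ̇′_M)ᵀ(ξ ⊗ ξ)Ẽ − (Φ′_M)ᵀ Q_Mᵀ r), θ̂̇_C := Γ_C(−2(Φ′_C)ᵀ(ξ ⊗ ξ)Ẽ − (Φ′_C)ᵀ Q_Cᵀ r), θ̂̇_F := −Γ_F (Φ′_F)ᵀ r, θ̂̇_G := −Γ_G (Φ′_G)ᵀ r, and set θ̃̇_i := −θ̂̇_i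 for each i. Then all cross terms cancel: rᵀ(−Q_M Φ′_M θ̃_M − Q_C Φ′_C θ̃_C − Φ′_G θ̃_G − Φ′_F θ̃_F) + Ẽ·(ξ ⊗ ξ)ᵀ(Φ̇′_M θ̃_M − 2 Φ′_C θ̃_C) + Σ_{i∈{M,C,G,F}} θ̃_iᵀ Γ_i^{-1} θ̃̇_i = 0. -/
open Matrix
open scoped Kronecker

noncomputable section

/-- The matrix `aᵀ ⊗ Iₙ ∈ ℝ^{n × mn}` (Kronecker product of the row vector `aᵀ`
with the identity, with the trivial row index collapsed). -/
def rowKronId (n m : ℕ) (a : Fin m → ℝ) : Matrix (Fin n) (Fin m × Fin n) ℝ :=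
  ((Matrix.of fun (_ : Fin 1) j => a j) ⊗ₖ (1 : Matrix (Fin n) (Fin n) ℝ)).submatrix
    (fun i => ((0 : Fin 1), i)) id

/-- The Kronecker product `ξ ⊗ ξ ∈ ℝ^{n²}` of a vector with itself. -/
def kronVec {n : ℕ} (ξ : Fin n → ℝ) : Fin n × Fin n → ℝ :=
  fun p => ξ p.1 * ξ p.2

/-!
Each update law has the form `θ̂̇ᵢ = Γᵢ gᵢ`, so `θ̃ᵢᵀ Γᵢ⁻¹ θ̃̇ᵢ = -θ̃ᵢᵀ gᵢ`. The vector `gᵢ` is the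
transposed regressor applied to the error signals `r` and `Ẽ (ξ ⊗ ξ)`, so by adjointness
`θ̃ᵢᵀ gᵢ` is exactly the contribution of block `i` to the first two terms.
-/

namespace Matrix

variable {m n R : Type*} [Fintype m] [Fintype n] [CommRing R]

theorem nonsing_inv_mulVec_mulVec [DecidableEq n] {A : Matrix n n R} (h : IsUnit A.det)
    (v : n → R) : A⁻¹ *ᵥ (A *ᵥ v) = v := by
  rw [mulVec_mulVec, nonsing_inv_mul A h, one_mulVec]

theorem transpose_mulVec_dotProduct (A : Matrix m n R) (x : n → R) (y : m → R) :
    Aᵀ *ᵥ y ⬝ᵥ x = y ⬝ᵥ A *ᵥ x := by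
  rw [dotProduct_comm, dotProduct_transpose_mulVec]

end Matrix

/-- Cancellation of all parameter-estimation cross terms in the Lyapunov derivative
under the (unprojected) SS-LbPINN weight update laws. -/
theorem cross_term_cancellation (n κM κC κG κF : ℕ)
    (θM : Fin κM → ℝ) (θC : Fin κC → ℝ) (θG : Fin κG → ℝ) (θF : Fin κF → ℝ)
    (ΓM : Matrix (Fin κM) (Fin κM) ℝ) (ΓC : Matrix (Fin κC) (Fin κC) ℝ)
    (ΓG : Matrix (Fin κG) (Fin κG) ℝ) (ΓF : Matrix (Fin κF) (Fin κF) ℝ)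
    (hΓM : IsUnit ΓM.det) (hΓC : IsUnit ΓC.det)
    (hΓG : IsUnit ΓG.det) (hΓF : IsUnit ΓF.det)
    (r a b ξ : Fin n → ℝ) (Etil : ℝ)
    (Φ'M dΦ'M : Matrix (Fin n × Fin n) (Fin κM) ℝ)
    (Φ'C : Matrix (Fin n × Fin n) (Fin κC) ℝ)
    (Φ'F : Matrix (Fin n) (Fin κF) ℝ) (Φ'G : Matrix (Fin n) (Fin κG) ℝ)
    -- the (unprojected) weight update laws
    (dθhM : Fin κM → ℝ) (dθhC : Fin κC → ℝ) (dθhF : Fin κF → ℝ) (dθhG : Fin κG → ℝ)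
    (hhM : dθhM = ΓM.mulVec (dΦ'Mᵀ.mulVec (Etil • kronVec ξ)
        - Φ'Mᵀ.mulVec ((rowKronId n n a)ᵀ.mulVec r)))
    (hhC : dθhC = ΓC.mulVec ((-(2 : ℝ)) • Φ'Cᵀ.mulVec (Etil • kronVec ξ)
        - Φ'Cᵀ.mulVec ((rowKronId n n b)ᵀ.mulVec r)))
    (hhF : dθhF = -(ΓF.mulVec (Φ'Fᵀ.mulVec r)))
    (hhG : dθhG = -(ΓG.mulVec (Φ'Gᵀ.mulVec r)))
    -- the parameter-estimation-error derivatives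
    (dθtM : Fin κM → ℝ) (dθtC : Fin κC → ℝ) (dθtF : Fin κF → ℝ) (dθtG : Fin κG → ℝ)
    (htM : dθtM = -dθhM) (htC : dθtC = -dθhC)
    (htF : dθtF = -dθhF) (htG : dθtG = -dθhG) :
    r ⬝ᵥ (-((rowKronId n n a).mulVec (Φ'M.mulVec θM))
          - (rowKronId n n b).mulVec (Φ'C.mulVec θC)
          - Φ'G.mulVec θG - Φ'F.mulVec θF)
      + Etil * (kronVec ξ ⬝ᵥ (dΦ'M.mulVec θM - (2 : ℝ) • Φ'C.mulVec θC))
      + (θM ⬝ᵥ ΓM⁻¹.mulVec dθtM + θC ⬝ᵥ ΓC⁻¹.mulVec dθtC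
          + θG ⬝ᵥ ΓG⁻¹.mulVec dθtG + θF ⬝ᵥ ΓF⁻¹.mulVec dθtF) = 0 := by
  subst htM htC htF htG hhM hhC hhF hhG
  simp only [mulVec_neg, neg_neg, nonsing_inv_mulVec_mulVec hΓM, nonsing_inv_mulVec_mulVec hΓC,
    nonsing_inv_mulVec_mulVec hΓG, nonsing_inv_mulVec_mulVec hΓF]
  simp only [mulVec_smul, dotProduct_sub, dotProduct_neg, dotProduct_smul,
    smul_eq_mul, dotProduct_transpose_mulVec, transpose_mulVec_dotProduct]
  ring
end
end

section
/- Let 0 < β₁ ≤ β₂, λ₁ > 0, λ₂ > 0, let P : [0, ∞) → [0, ∞) be nondecreasing, let ζ : [0, ∞) → ℝ^ψ be continuous, let z : [0, ∞) → ℝᵐ be continuous with ‖z(t)‖ ≤ ‖ζ(t)‖ for all t, and let V : [0, ∞) → ℝ be differentiable with β₁‖ζ(t)‖² ≤ V(t) ≤ β₂‖ζ(t)‖² and V′(t) ≤ −(λ₁ − P(‖z(t)‖))·‖z(t)‖² for all t ≥ 0. If λ₁ ≥ λ₂ + P(√(β₂/β₁)·‖ζ(0)‖), then for all t ≥ 0: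 V′(t) ≤ −λ₂‖z(t)‖², V is nonincreasing, and ‖ζ(t)‖ ≤ √(β₂/β₁)·‖ζ(0)‖. -/
/-!
While `V t ≤ V 0`, the sandwich bounds give `‖z t‖ ≤ ‖ζ t‖ ≤ B := √(β₂/β₁) ‖ζ 0‖`, so by the gain
condition and the monotonicity of `P` the Lyapunov inequality becomes `V' ≤ -λ₂ ‖z‖² ≤ 0`.
A continuous induction keeps `V ≤ V 0` for all time. At a time `x` with `V x ≤ V 0`: if
`‖z x‖ < B`, then `V' ≤ 0` on a right neighbourhood of `x` by continuity of `z`; if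
`‖z x‖ = B > 0`, then `V' x ≤ -λ₂ B² < 0`; and if `B = 0`, then `V x = 0` while `V' ≤ K V` near `x`
(monotone `P` is bounded on bounded sets), so Grönwall's inequality keeps `V` at `0`.
-/

open Set Filter Topology

theorem le_of_forall_eventually_le {f : ℝ → ℝ} {a c : ℝ} (hf : ContinuousOn f (Ici a))
    (ha : f a ≤ c) (hstep : ∀ x, a ≤ x → f x ≤ c → ∀ᶠ y in 𝓝[>] x, f y ≤ c) {x : ℝ}
    (hx : a ≤ x) : f x ≤ c := by
  have hclosed : IsClosed ({y | f y ≤ c} ∩ Icc a x) := by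
    rw [inter_comm]
    exact (hf.mono Icc_subset_Ici_self).preimage_isClosed_of_isClosed isClosed_Icc isClosed_Iic
  exact hclosed.Icc_subset_of_forall_mem_nhdsWithin ha (fun y hy ↦ hstep y hy.2.1 hy.1)
    ⟨hx, le_rfl⟩

theorem HasDerivWithinAt.eventually_lt_of_neg {f : ℝ → ℝ} {f' x : ℝ}
    (hf : HasDerivWithinAt f f' (Ici x) x) (hf' : f' < 0) : ∀ᶠ y in 𝓝[>] x, f y < f x := by
  filter_upwards [hf.Ioi_of_Ici.limsup_slope_le' (lt_irrefl x) hf', self_mem_nhdsWithin]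
    with y hslope hxy
  exact (slope_neg_iff_of_le (le_of_lt hxy)).1 hslope

theorem eventually_nonpos_of_deriv_le_mul_self {f f' : ℝ → ℝ} {K x : ℝ}
    (hf : ∀ᶠ y in 𝓝[≥] x, HasDerivAt f (f' y) y) (bound : ∀ᶠ y in 𝓝[≥] x, f' y ≤ K * f y)
    (hx : f x ≤ 0) : ∀ᶠ y in 𝓝[>] x, f y ≤ 0 := by
  obtain ⟨b, hxb, hsub⟩ := mem_nhdsGE_iff_exists_Icc_subset.1 (hf.and bound)
  have hgronwall : ∀ y ∈ Icc x b, f y ≤ gronwallBound 0 K 0 (y - x) :=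
    le_gronwallBound_of_liminf_deriv_right_le
      (fun y hy ↦ (hsub hy).1.continuousAt.continuousWithinAt)
      (fun y hy _ hr ↦ (hsub (Ico_subset_Icc_self hy)).1.hasDerivWithinAt.liminf_right_slope_le hr)
      hx (fun y hy ↦ by simpa using (hsub (Ico_subset_Icc_self hy)).2)
  filter_upwards [nhdsWithin_mono x Ioi_subset_Ici_self (Icc_mem_nhdsGE hxb)] with y hy
  simpa only [gronwallBound_ε0_δ0] using hgronwall y hy

theorem eventually_le_of_deriv_nonpos {f f' : ℝ → ℝ} {x : ℝ}
    (hf : ∀ᶠ y in 𝓝[≥] x, HasDerivAt f (f' y) y) (hf' : ∀ᶠ y in 𝓝[≥] x, f' y ≤ 0) :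
    ∀ᶠ y in 𝓝[>] x, f y ≤ f x := by
  have := eventually_nonpos_of_deriv_le_mul_self (f := fun y ↦ f y - f x) (K := 0)
    (hf.mono fun y hy ↦ hy.sub_const (f x)) (by simpa only [zero_mul] using hf') (sub_self _).le
  simpa only [sub_nonpos] using this

theorem le_sqrt_div_mul_of_mul_sq_le {β₁ β₂ a b : ℝ} (hβ₁ : 0 < β₁) (hb : 0 ≤ b)
    (h : β₁ * a ^ 2 ≤ β₂ * b ^ 2) : a ≤ √(β₂ / β₁) * b := by
  have hsq : a ^ 2 ≤ β₂ / β₁ * b ^ 2 := by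
    rw [div_mul_eq_mul_div, le_div_iff₀ hβ₁]
    linarith
  calc a ≤ √(β₂ / β₁ * b ^ 2) := Real.le_sqrt_of_sq_le hsq
    _ = √(β₂ / β₁) * b := by rw [Real.sqrt_mul' _ (sq_nonneg b), Real.sqrt_sq hb]

theorem neg_sub_mul_sq_le_of_gain {P : ℝ → ℝ} (hP : MonotoneOn P (Ici 0)) {lam₁ lam₂ r B : ℝ}
    (hr : 0 ≤ r) (hrB : r ≤ B) (hgain : lam₂ + P B ≤ lam₁) :
    -(lam₁ - P r) * r ^ 2 ≤ -lam₂ * r ^ 2 := by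
  have hPr : P r ≤ P B := hP hr (hr.trans hrB) hrB
  exact mul_le_mul_of_nonneg_right (by linarith) (sq_nonneg r)

section Lyapunov

variable {E F : Type*} [NormedAddCommGroup E] [NormedAddCommGroup F]

theorem norm_le_of_le_initial {β₁ β₂ : ℝ} (hβ₁ : 0 < β₁) {ζ : ℝ → E} {V : ℝ → ℝ}
    (hsandwich : ∀ t, 0 ≤ t → β₁ * ‖ζ t‖ ^ 2 ≤ V t ∧ V t ≤ β₂ * ‖ζ t‖ ^ 2) {t : ℝ} (ht : 0 ≤ t)
    (hVt : V t ≤ V 0) : ‖ζ t‖ ≤ √(β₂ / β₁) * ‖ζ 0‖ :=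
  le_sqrt_div_mul_of_mul_sq_le hβ₁ (norm_nonneg _)
    ((hsandwich t ht).1.trans (hVt.trans (hsandwich 0 le_rfl).2))

theorem eventually_nonneg_and_norm_lt {z : ℝ → F} (hz : Continuous z) {x r : ℝ} (hx : 0 ≤ x)
    (hr : ‖z x‖ < r) : ∀ᶠ y in 𝓝[≥] x, 0 ≤ y ∧ ‖z y‖ < r :=
  (eventually_nhdsWithin_of_forall fun _ hy ↦ hx.trans hy).and <| nhdsWithin_le_nhds <|
    hz.norm.continuousAt.eventually_lt continuousAt_const hr

theorem eventually_lyapunov_nonpos {β₁ lam₁ : ℝ} (hβ₁ : 0 < β₁) {P : ℝ → ℝ}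
    (hPmono : MonotoneOn P (Ici 0)) {ζ : ℝ → E} {z : ℝ → F} (hz : Continuous z)
    (hzζ : ∀ t, 0 ≤ t → ‖z t‖ ≤ ‖ζ t‖) {V V' : ℝ → ℝ} (hV : ∀ t, 0 ≤ t → HasDerivAt V (V' t) t)
    (hlower : ∀ t, 0 ≤ t → β₁ * ‖ζ t‖ ^ 2 ≤ V t)
    (hV' : ∀ t, 0 ≤ t → V' t ≤ -(lam₁ - P ‖z t‖) * ‖z t‖ ^ 2) {x : ℝ} (hx : 0 ≤ x)
    (hVx : V x ≤ 0) : ∀ᶠ y in 𝓝[>] x, V y ≤ 0 := by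
  set R := ‖z x‖ + 1
  set K := max (P R - lam₁) 0 / β₁
  have hbound : ∀ y, 0 ≤ y → ‖z y‖ ≤ R → V' y ≤ K * V y := fun y hy hzy ↦ by
    have hPz : P ‖z y‖ ≤ P R := hPmono (norm_nonneg _) ((norm_nonneg _).trans hzy) hzy
    have hζV := mul_le_mul_of_nonneg_left (hlower y hy) (le_max_right (P R - lam₁) 0)
    calc V' y ≤ (P ‖z y‖ - lam₁) * ‖z y‖ ^ 2 := by linarith [hV' y hy]
      _ ≤ max (P R - lam₁) 0 * ‖z y‖ ^ 2 :=
        mul_le_mul_of_nonneg_right (le_max_of_le_left (by linarith)) (sq_nonneg _)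
      _ ≤ max (P R - lam₁) 0 * ‖ζ y‖ ^ 2 := mul_le_mul_of_nonneg_left
        (pow_le_pow_left₀ (norm_nonneg _) (hzζ y hy) 2) (le_max_right _ _)
      _ ≤ K * V y := by
        rw [div_mul_eq_mul_div, le_div_iff₀ hβ₁]
        linarith
  have hnear := eventually_nonneg_and_norm_lt hz hx (lt_add_one ‖z x‖)
  exact eventually_nonpos_of_deriv_le_mul_self (hnear.mono fun y hy ↦ hV y hy.1)
    (hnear.mono fun y hy ↦ hbound y hy.1 hy.2.le) hVx

theorem eventually_lyapunov_le_initial {β₁ β₂ lam₁ lam₂ : ℝ} (hβ₁ : 0 < β₁) (hlam₂ : 0 < lam₂)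
    {P : ℝ → ℝ} (hPmono : MonotoneOn P (Ici 0)) {ζ : ℝ → E} {z : ℝ → F} (hz : Continuous z)
    (hzζ : ∀ t, 0 ≤ t → ‖z t‖ ≤ ‖ζ t‖) {V V' : ℝ → ℝ} (hV : ∀ t, 0 ≤ t → HasDerivAt V (V' t) t)
    (hsandwich : ∀ t, 0 ≤ t → β₁ * ‖ζ t‖ ^ 2 ≤ V t ∧ V t ≤ β₂ * ‖ζ t‖ ^ 2)
    (hV' : ∀ t, 0 ≤ t → V' t ≤ -(lam₁ - P ‖z t‖) * ‖z t‖ ^ 2)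
    (hgain : lam₂ + P (√(β₂ / β₁) * ‖ζ 0‖) ≤ lam₁) {x : ℝ} (hx : 0 ≤ x) (hVx : V x ≤ V 0) :
    ∀ᶠ y in 𝓝[>] x, V y ≤ V 0 := by
  set B := √(β₂ / β₁) * ‖ζ 0‖
  have hζx : ‖ζ x‖ ≤ B := norm_le_of_le_initial hβ₁ hsandwich hx hVx
  have hzx : ‖z x‖ ≤ B := (hzζ x hx).trans hζx
  rcases ((norm_nonneg _).trans hzx).eq_or_lt with hB | hB
  · have hζx0 : ‖ζ x‖ = 0 := le_antisymm (hζx.trans hB.ge) (norm_nonneg _)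
    have hVx0 : V x ≤ 0 := by simpa [hζx0] using (hsandwich x hx).2
    have hV0 : 0 ≤ V 0 := (by positivity : 0 ≤ β₁ * ‖ζ 0‖ ^ 2).trans (hsandwich 0 le_rfl).1
    filter_upwards [eventually_lyapunov_nonpos hβ₁ hPmono hz hzζ hV
      (fun t ht ↦ (hsandwich t ht).1) hV' hx hVx0] with y hy
    exact hy.trans hV0
  have hdecay : ∀ y, 0 ≤ y → ‖z y‖ ≤ B → V' y ≤ -lam₂ * ‖z y‖ ^ 2 := fun y hy hzy ↦
    (hV' y hy).trans (neg_sub_mul_sq_le_of_gain hPmono (norm_nonneg _) hzy hgain)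
  rcases hzx.lt_or_eq with hlt | heq
  · have hnear := eventually_nonneg_and_norm_lt hz hx hlt
    have hnonpos : ∀ᶠ y in 𝓝[≥] x, V' y ≤ 0 := hnear.mono fun y hy ↦
      (hdecay y hy.1 hy.2.le).trans
        (mul_nonpos_of_nonpos_of_nonneg (neg_nonpos.2 hlam₂.le) (sq_nonneg _))
    filter_upwards [eventually_le_of_deriv_nonpos (hnear.mono fun y hy ↦ hV y hy.1) hnonpos]
      with y hy
    exact hy.trans hVx
  · have hneg : V' x < 0 := (hdecay x hx heq.le).trans_lt <| by
      rw [heq, neg_mul]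
      exact neg_neg_of_pos (by positivity)
    filter_upwards [(hV x hx).hasDerivWithinAt.eventually_lt_of_neg hneg] with y hy
    exact hy.le.trans hVx

end Lyapunov

theorem semiglobal_gain_condition_general (ψ m : ℕ) (β₁ β₂ lam₁ lam₂ : ℝ)
    (hβ₁ : 0 < β₁) (hlam₂ : 0 < lam₂)
    (P : ℝ → ℝ) (hPmono : MonotoneOn P (Set.Ici 0))
    (ζ : ℝ → EuclideanSpace ℝ (Fin ψ))
    (z : ℝ → EuclideanSpace ℝ (Fin m)) (hz : Continuous z)
    (hzζ : ∀ t, 0 ≤ t → ‖z t‖ ≤ ‖ζ t‖)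
    (V V' : ℝ → ℝ) (hV : ∀ t, 0 ≤ t → HasDerivAt V (V' t) t)
    (hsandwich : ∀ t, 0 ≤ t → β₁ * ‖ζ t‖ ^ 2 ≤ V t ∧ V t ≤ β₂ * ‖ζ t‖ ^ 2)
    (hV' : ∀ t, 0 ≤ t → V' t ≤ -(lam₁ - P ‖z t‖) * ‖z t‖ ^ 2)
    (hgain : lam₂ + P (Real.sqrt (β₂ / β₁) * ‖ζ 0‖) ≤ lam₁) :
    (∀ t, 0 ≤ t → V' t ≤ -lam₂ * ‖z t‖ ^ 2) ∧
      AntitoneOn V (Set.Ici 0) ∧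
      ∀ t, 0 ≤ t → ‖ζ t‖ ≤ Real.sqrt (β₂ / β₁) * ‖ζ 0‖ := by
  have hVcont : ContinuousOn V (Ici 0) := fun t ht ↦ (hV t ht).continuousAt.continuousWithinAt
  have hVle : ∀ t, 0 ≤ t → V t ≤ V 0 := fun t ht ↦
    le_of_forall_eventually_le hVcont le_rfl (fun x hx hVx ↦ eventually_lyapunov_le_initial hβ₁
      hlam₂ hPmono hz hzζ hV hsandwich hV' hgain hx hVx) ht
  have hζB : ∀ t, 0 ≤ t → ‖ζ t‖ ≤ √(β₂ / β₁) * ‖ζ 0‖ := fun t ht ↦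
    norm_le_of_le_initial hβ₁ hsandwich ht (hVle t ht)
  have hdecay : ∀ t, 0 ≤ t → V' t ≤ -lam₂ * ‖z t‖ ^ 2 := fun t ht ↦ (hV' t ht).trans
    (neg_sub_mul_sq_le_of_gain hPmono (norm_nonneg _) ((hzζ t ht).trans (hζB t ht)) hgain)
  refine ⟨hdecay, antitoneOn_of_hasDerivWithinAt_nonpos (convex_Ici 0) hVcont
    (fun t ht ↦ (hV t (interior_subset ht)).hasDerivWithinAt) (fun t ht ↦ (hdecay t
      (interior_subset ht)).trans (mul_nonpos_of_nonpos_of_nonneg (neg_nonpos.2 hlam₂.le)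
        (sq_nonneg _))), hζB⟩

/-- Semi-global gain-condition argument: if `β₁‖ζ‖² ≤ V ≤ β₂‖ζ‖²`,
`V′ ≤ −(λ₁ − P(‖z‖))‖z‖²` with `‖z(t)‖ ≤ ‖ζ(t)‖`, and
`λ₁ ≥ λ₂ + P(√(β₂/β₁)‖ζ(0)‖)`, then `V′ ≤ −λ₂‖z‖²`, `V` is nonincreasing on `[0,∞)`,
and `‖ζ(t)‖ ≤ √(β₂/β₁)‖ζ(0)‖` for all `t ≥ 0`. -/
theorem semiglobal_gain_condition (ψ m : ℕ) (β₁ β₂ lam₁ lam₂ : ℝ)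
    (hβ₁ : 0 < β₁) (hβ₁₂ : β₁ ≤ β₂) (hlam₁ : 0 < lam₁) (hlam₂ : 0 < lam₂)
    (P : ℝ → ℝ) (hPmono : MonotoneOn P (Set.Ici 0))
    (hPnonneg : ∀ s ∈ Set.Ici (0 : ℝ), 0 ≤ P s)
    (ζ : ℝ → EuclideanSpace ℝ (Fin ψ)) (hζ : Continuous ζ)
    (z : ℝ → EuclideanSpace ℝ (Fin m)) (hz : Continuous z)
    (hzζ : ∀ t, 0 ≤ t → ‖z t‖ ≤ ‖ζ t‖)
    (V V' : ℝ → ℝ) (hV : ∀ t, 0 ≤ t → HasDerivAt V (V' t) t)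
    (hsandwich : ∀ t, 0 ≤ t → β₁ * ‖ζ t‖ ^ 2 ≤ V t ∧ V t ≤ β₂ * ‖ζ t‖ ^ 2)
    (hV' : ∀ t, 0 ≤ t → V' t ≤ -(lam₁ - P ‖z t‖) * ‖z t‖ ^ 2)
    (hgain : lam₂ + P (Real.sqrt (β₂ / β₁) * ‖ζ 0‖) ≤ lam₁) :
    (∀ t, 0 ≤ t → V' t ≤ -lam₂ * ‖z t‖ ^ 2) ∧
      AntitoneOn V (Set.Ici 0) ∧
      ∀ t, 0 ≤ t → ‖ζ t‖ ≤ Real.sqrt (β₂ / β₁) * ‖ζ 0‖ :=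
  semiglobal_gain_condition_general ψ m β₁ β₂ lam₁ lam₂ hβ₁ hlam₂ P hPmono ζ z hz hzζ V V' hV
    hsandwich hV' hgain
end
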